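/- Let $n > 2$, $l_1 = 4$, and define recursively $l_{i+1} = \frac{l_i(n+1)}{n+2-l_i}$ for those $i$ with $l_i < n+2$. Then as long as the terms are defined, the sequence $(l_i)$ is strictly increasing and satisfies $l_{i+1} \geq l_1 \left(\frac{n+1}{n-2}\right)^i$ for all $i \geq 1$; in particular, there exists a smallest integer $k \geq 2$ with $l_k \geq n+2$. -/

import Mathlib

/-!
Put `r = (n+1)/(n-2) > 1`. The map `x ↦ x(n+1)/(n+2-x)` exceeds `x` once `x > 1`, and for
`4 ≤ x < n+2` its denominator is at most `n-2`, so it multiplies `x` by at least `r`.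
Hence `l_{i+1} ≥ 4 r^i` while the terms stay below `n+2`, and since `r^i` is unbounded
the threshold `n+2` is eventually reached; the first such index is the required `k`.
-/

section Step

variable {N x : ℝ}

theorem one_lt_add_one_div_sub_two (hN : 2 < N) : 1 < (N + 1) / (N - 2) := by
  rw [one_lt_div (by linarith)]
  linarith

theorem lt_mul_add_one_div (hx : 1 < x) (hxN : x < N + 2) : x < x * (N + 1) / (N + 2 - x) := by
  rw [lt_div_iff₀ (by linarith)]
  nlinarith

theorem mul_div_sub_two_le (hN : 2 < N) (hx : 4 ≤ x) (hxN : x < N + 2) :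
    x * ((N + 1) / (N - 2)) ≤ x * (N + 1) / (N + 2 - x) := by
  rw [← mul_div_assoc]
  exact div_le_div_of_nonneg_left (by nlinarith) (by linarith) (by linarith)

end Step

section Iteration

variable {N : ℝ} {l : ℕ → ℝ}

theorem mul_pow_le_of_forall_lt (hN : 2 < N) (h1 : 4 ≤ l 1)
    (hrec : ∀ i, 1 ≤ i → l i < N + 2 → l (i + 1) = l i * (N + 1) / (N + 2 - l i)) :
    ∀ i, (∀ j, 1 ≤ j → j ≤ i → l j < N + 2) → l 1 * ((N + 1) / (N - 2)) ^ i ≤ l (i + 1) := by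
  have hr := one_lt_add_one_div_sub_two hN
  intro i
  induction i with
  | zero => simp
  | succ m ih =>
    intro hlt
    have hm : l 1 * ((N + 1) / (N - 2)) ^ m ≤ l (m + 1) :=
      ih fun j hj hjm => hlt j hj (by omega)
    have hx : 4 ≤ l (m + 1) :=
      h1.trans <| (le_mul_of_one_le_right (by linarith) (one_le_pow₀ hr.le)).trans hm
    have hxN : l (m + 1) < N + 2 := hlt (m + 1) (by omega) le_rfl
    calc l 1 * ((N + 1) / (N - 2)) ^ (m + 1)
        = l 1 * ((N + 1) / (N - 2)) ^ m * ((N + 1) / (N - 2)) := by rw [pow_succ, mul_assoc]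
      _ ≤ l (m + 1) * ((N + 1) / (N - 2)) := by gcongr
      _ ≤ l (m + 1) * (N + 1) / (N + 2 - l (m + 1)) := mul_div_sub_two_le hN hx hxN
      _ = l (m + 1 + 1) := (hrec (m + 1) (by omega) hxN).symm

theorem exists_le_of_forall_lt (hN : 2 < N) (h1 : 4 ≤ l 1)
    (hrec : ∀ i, 1 ≤ i → l i < N + 2 → l (i + 1) = l i * (N + 1) / (N + 2 - l i)) :
    ∃ k, 1 ≤ k ∧ N + 2 ≤ l k := by
  by_contra! hall
  obtain ⟨i, hi⟩ := pow_unbounded_of_one_lt ((N + 2) / 4) (one_lt_add_one_div_sub_two hN)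
  have hgrowth := mul_pow_le_of_forall_lt hN h1 hrec i fun j hj _ => hall j hj
  have hpos : 0 < ((N + 1) / (N - 2)) ^ i :=
    pow_pos (zero_lt_one.trans (one_lt_add_one_div_sub_two hN)) i
  rw [div_lt_iff₀ four_pos] at hi
  nlinarith [hall (i + 1) (by omega)]

end Iteration

/-- Iteration of exponents: with `n > 2`, `l₁ = 4` and `l_{i+1} = l_i(n+1)/(n+2-l_i)`
(applied while `l_i < n+2`), the sequence is strictly increasing, satisfies
`l_{i+1} ≥ l₁ ((n+1)/(n-2))^i` as long as the terms are defined, and there is a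
smallest integer `k ≥ 2` with `l_k ≥ n+2`. -/
theorem stmt2 (n : ℕ) (hn : 2 < n) (l : ℕ → ℝ) (h1 : l 1 = 4)
    (hrec : ∀ i, 1 ≤ i → l i < (n : ℝ) + 2 →
      l (i + 1) = l i * ((n : ℝ) + 1) / ((n : ℝ) + 2 - l i)) :
    (∀ i, 1 ≤ i → (∀ j, 1 ≤ j → j ≤ i → l j < (n : ℝ) + 2) →
        l i < l (i + 1) ∧ 4 * (((n : ℝ) + 1) / ((n : ℝ) - 2)) ^ i ≤ l (i + 1)) ∧
    (∃ k, 2 ≤ k ∧ (n : ℝ) + 2 ≤ l k ∧ ∀ m, 2 ≤ m → m < k → l m < (n : ℝ) + 2) := by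
  have hN : (2 : ℝ) < n := by exact_mod_cast hn
  have h4 : 4 ≤ l 1 := h1.ge
  have growth := mul_pow_le_of_forall_lt hN h4 hrec
  rw [h1] at growth
  refine ⟨fun i hi hlt => ⟨?_, growth i hlt⟩, ?_⟩
  · obtain ⟨m, rfl⟩ : ∃ m, i = m + 1 := ⟨i - 1, by omega⟩
    have hx : 4 ≤ l (m + 1) :=
      le_trans (le_mul_of_one_le_right (by norm_num)
        (one_le_pow₀ (one_lt_add_one_div_sub_two hN).le)) (growth m fun j hj _ => hlt j hj (by omega))
    rw [hrec (m + 1) hi (hlt (m + 1) hi le_rfl)]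
    exact lt_mul_add_one_div (by linarith) (hlt (m + 1) hi le_rfl)
  · have hex : ∃ k, 2 ≤ k ∧ (n : ℝ) + 2 ≤ l k := by
      obtain ⟨k, hk, hkN⟩ := exists_le_of_forall_lt hN h4 hrec
      refine ⟨k, ?_, hkN⟩
      rcases hk.eq_or_lt with rfl | hk
      · linarith
      · exact hk
    refine ⟨Nat.find hex, (Nat.find_spec hex).1, (Nat.find_spec hex).2, fun m hm hmk => ?_⟩
    exact lt_of_not_ge fun hmN => Nat.find_min hex hmk ⟨hm, hmN⟩
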